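/- arXiv:1510.08113 — 5 statements merged into one kernel-verified Lean document; each statement's English description precedes it below -/
import Mathlib

section
/- Let δ > 0 and let X be a δ-hyperbolic metric space in which, for all x,x' ∈ X and every l > 0, there is a (1,l)-quasi-geodesic joining x to x'. Let α ≥ 0 and let Y ⊆ X be an α-quasi-convex subset. Then for every A ≥ α, the A-neighborhood Y^{+A} = { x ∈ X : d(x,Y) ≤ A } is 2δ-quasi-convex. -/
open Metric

universe u v

/-- The Gromov product `(y,z)_x = (d(y,x)+d(z,x)-d(y,z))/2`. -/
noncomputable def gp {X : Type u} [MetricSpace X] (x y z : X) : ℝ :=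
  (dist y x + dist z x - dist y z) / 2

/-- `X` is `δ`-hyperbolic: the four point inequality. -/
def IsHyp (X : Type u) [MetricSpace X] (δ : ℝ) : Prop :=
  ∀ x y z t : X, min (gp t x y) (gp t y z) - δ ≤ gp t x z

/-- `γ` restricted to `[a,b]` is a `(1,l)`-quasi-geodesic. -/
def IsQG {X : Type u} [MetricSpace X] (l a b : ℝ) (γ : ℝ → X) : Prop :=
  ∀ t ∈ Set.Icc a b, ∀ t' ∈ Set.Icc a b,
    dist (γ t) (γ t') ≤ |t - t'| ∧ |t - t'| ≤ dist (γ t) (γ t') + l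

/-- Any two points of `X` are joined by a `(1,l)`-quasi-geodesic, for every `l > 0`. -/
def QGSpace (X : Type u) [MetricSpace X] : Prop :=
  ∀ x x' : X, ∀ l : ℝ, 0 < l →
    ∃ a b : ℝ, ∃ γ : ℝ → X, a ≤ b ∧ IsQG l a b γ ∧ γ a = x ∧ γ b = x'

/-- `Y` is `α`-quasi-convex. -/
def QConvex {X : Type u} [MetricSpace X] (α : ℝ) (Y : Set X) : Prop :=
  ∀ x : X, ∀ y ∈ Y, ∀ y' ∈ Y, infDist x Y ≤ gp x y y' + α

/-- The hull of `Y`: the union of the images of all `(1,δ)`-quasi-geodesics defined on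
compact intervals whose two endpoints lie in `Y`. -/
def hull {X : Type u} [MetricSpace X] (δ : ℝ) (Y : Set X) : Set X :=
  { z | ∃ a b : ℝ, ∃ γ : ℝ → X, a ≤ b ∧ IsQG δ a b γ ∧ γ a ∈ Y ∧ γ b ∈ Y ∧
      z ∈ γ '' Set.Icc a b }

/-- The `r`-neighborhood of a subset. -/
def nbhd {X : Type u} [MetricSpace X] (r : ℝ) (Z : Set X) : Set X :=
  { x | infDist x Z ≤ r }

/-- The `A`-neighborhood of an `α`-quasi-convex subset is `2δ`-quasi-convex. -/
theorem neighborhood_of_quasi_convex {X : Type u} [MetricSpace X] (δ : ℝ) (hδ : 0 < δ)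
    (hX : IsHyp X δ) (hQG : QGSpace X) (α : ℝ) (hα : 0 ≤ α)
    (Y : Set X) (hY : QConvex α Y) (A : ℝ) (hA : α ≤ A) :
    QConvex (2 * δ) (nbhd A Y) := by
  intro x y hy y' hy'
  have hm0 : 0 ≤ gp x y y' := by
    have := dist_triangle y x y'
    have h1 : dist x y' = dist y' x := dist_comm x y'
    simp only [gp]; linarith
  rcases Y.eq_empty_or_nonempty with hYe | hYne
  · -- Y empty: the neighborhood is the whole space
    have hx : x ∈ nbhd A Y := by
      simp only [nbhd, Set.mem_setOf_eq, hYe, Metric.infDist_empty]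
      linarith
    have h0 : infDist x (nbhd A Y) ≤ dist x x := Metric.infDist_le_dist_of_mem hx
    simp at h0
    linarith
  · have hA0 : 0 ≤ A := le_trans hα hA
    -- reduce to: ∀ η > 0, infDist x (nbhd A Y) ≤ gp x y y' + 2δ + η
    have key : ∀ η : ℝ, 0 < η → infDist x (nbhd A Y) ≤ gp x y y' + 2 * δ + η := by
      intro η hη
      set ε : ℝ := η / 4 with hεdef
      set l : ℝ := η / 2 with hldef
      have hε : 0 < ε := by positivity
      have hl : 0 < l := by positivity
      -- pick z, z' in Y close to y, y'
      have hyY : infDist y Y < A + ε := lt_of_le_of_lt hy (by linarith)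
      have hy'Y : infDist y' Y < A + ε := lt_of_le_of_lt hy' (by linarith)
      obtain ⟨z, hzY, hz⟩ := (Metric.infDist_lt_iff hYne).mp hyY
      obtain ⟨z', hz'Y, hz'⟩ := (Metric.infDist_lt_iff hYne).mp hy'Y
      set D := infDist x Y with hD
      have hDz : D ≤ dist x z := Metric.infDist_le_dist_of_mem hzY
      have hDz' : D ≤ dist x z' := Metric.infDist_le_dist_of_mem hz'Y
      have hqc : D ≤ gp x z z' + α := hY x z hzY z' hz'Y
      -- lower bounds on the Gromov products
      have m1 : D - (A + ε) ≤ gp x y z := by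
        have t1 : dist z x ≤ dist z y + dist y x := dist_triangle z y x
        have c1 : dist x z = dist z x := dist_comm x z
        have c2 : dist y z = dist z y := dist_comm y z
        simp only [gp]; linarith
      have m3 : D - (A + ε) ≤ gp x z' y' := by
        have t1 : dist z' x ≤ dist z' y' + dist y' x := dist_triangle z' y' x
        have c1 : dist x z' = dist z' x := dist_comm x z'
        have c2 : dist y' z' = dist z' y' := dist_comm y' z'
        simp only [gp]; linarith
      have h2 : min (gp x z z') (gp x z' y') - δ ≤ gp x z y' := hX z z' y' x
      have h1 : min (gp x y z) (gp x z y') - δ ≤ gp x y y' := hX y z y' x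
      have hmin1 : D - (A + ε) ≤ min (gp x z z') (gp x z' y') :=
        le_min (by linarith) m3
      have hmin2 : D - (A + ε) - δ ≤ min (gp x y z) (gp x z y') :=
        le_min (by linarith) (by linarith)
      have hDle : D ≤ gp x y y' + A + ε + 2 * δ := by linarith
      -- pick v ∈ Y near realizing infDist
      have : infDist x Y < gp x y y' + A + 2 * ε + 2 * δ := by
        rw [← hD]; linarith
      obtain ⟨v, hvY, hv⟩ := (Metric.infDist_lt_iff hYne).mp this
      -- quasi-geodesic from x to v
      obtain ⟨a, b, γ, hab, hγ, hγa, hγb⟩ := hQG x v l hl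
      set s : ℝ := gp x y y' + 2 * δ + η with hsdef
      have hs0 : 0 ≤ s := by linarith
      rcases le_or_gt b (a + s) with hb | hb
      · -- v itself is close enough
        have hvS : v ∈ nbhd A Y := by
          simp only [nbhd, Set.mem_setOf_eq]
          rw [Metric.infDist_zero_of_mem hvY]; exact hA0
        have hd : dist x v ≤ s := by
          have := (hγ a ⟨le_refl a, hab⟩ b ⟨hab, le_refl b⟩).1
          rw [hγa, hγb] at this
          have : dist x v ≤ |a - b| := this
          rw [abs_sub_comm, abs_of_nonneg (by linarith)] at this
          linarith
        calc infDist x (nbhd A Y) ≤ dist x v := Metric.infDist_le_dist_of_mem hvS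
          _ ≤ s := hd
      · -- walk distance s along the quasi-geodesic
        set t : ℝ := a + s with htdef
        have htI : t ∈ Set.Icc a b := ⟨by linarith, by linarith⟩
        have haI : a ∈ Set.Icc a b := ⟨le_refl a, hab⟩
        have hbI : b ∈ Set.Icc a b := ⟨hab, le_refl b⟩
        have hxw : dist x (γ t) ≤ s := by
          have := (hγ a haI t htI).1
          rw [hγa] at this
          rw [abs_sub_comm, abs_of_nonneg (by linarith)] at this
          calc dist x (γ t) ≤ t - a := this
            _ = s := by rw [htdef]; ring
        have hlen : b - a ≤ dist x v + l := by
          have := (hγ a haI b hbI).2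
          rw [hγa, hγb, abs_sub_comm, abs_of_nonneg (by linarith)] at this
          linarith
        have hwv : dist (γ t) v ≤ b - t := by
          have := (hγ t htI b hbI).1
          rw [hγb, abs_sub_comm, abs_of_nonneg (by linarith)] at this
          linarith
        have hwA : dist (γ t) v ≤ A := by
          have : (2 : ℝ) * ε + l = η := by rw [hεdef, hldef]; ring
          have hle := hv.le
          calc dist (γ t) v ≤ b - t := hwv
            _ ≤ dist x v + l - s := by rw [htdef] at *; linarith
            _ ≤ A := by rw [hsdef] at *; linarith
        have hwS : γ t ∈ nbhd A Y := by
          simp only [nbhd, Set.mem_setOf_eq]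
          exact le_trans (Metric.infDist_le_dist_of_mem hvY) hwA
        calc infDist x (nbhd A Y) ≤ dist x (γ t) := Metric.infDist_le_dist_of_mem hwS
          _ ≤ s := hxw
    -- let η → 0
    have := le_of_forall_pos_le_add (a := infDist x (nbhd A Y)) (b := gp x y y' + 2 * δ)
      (fun η hη => by have := key η hη; linarith)
    linarith
end

section
/- Let δ > 0 and let X be a δ-hyperbolic metric space in which, for all x,x' ∈ X and every l > 0, there is a (1,l)-quasi-geodesic joining x to x'. Then for every subset Y ⊆ X, the hull Hull(Y) is 6δ-quasi-convex. -/
open Metric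

universe u v

lemma gp_comm {X : Type u} [MetricSpace X] (x y z : X) : gp x y z = gp x z y := by
  unfold gp; rw [dist_comm y z]; ring

lemma IsQG.mono {X : Type u} [MetricSpace X] {l a b a' b' : ℝ} {γ : ℝ → X}
    (h : IsQG l a b γ) (ha : a ≤ a') (hb : b' ≤ b) : IsQG l a' b' γ := by
  intro t ht t' ht'
  exact h t ⟨ha.trans ht.1, ht.2.trans hb⟩ t' ⟨ha.trans ht'.1, ht'.2.trans hb⟩

/-- Key lemma: some point of a (1,l)-quasi-geodesic is within
`(γa,γb)_x + 2l + 2δ` of `x`. -/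
lemma lemA {X : Type u} [MetricSpace X] {δ l a b : ℝ} (hδ : 0 < δ) (hl : 0 ≤ l)
    (hX : IsHyp X δ) {γ : ℝ → X} (hab : a ≤ b) (hγ : IsQG l a b γ) (x : X) :
    ∃ t ∈ Set.Icc a b, dist x (γ t) ≤ gp x (γ a) (γ b) + 2*l + 2*δ := by
  have hab' := hγ a ⟨le_refl a, hab⟩ b ⟨hab, le_refl b⟩
  have habs : |a - b| = b - a := by rw [abs_sub_comm, abs_of_nonneg (by linarith)]
  rw [habs] at hab'
  set T := gp (γ a) (γ b) x with hT
  have hTdef : T = (dist (γ b) (γ a) + dist x (γ a) - dist (γ b) x) / 2 := rfl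
  have cxp := dist_triangle x (γ b) (γ a)
  have cqx := dist_triangle (γ b) (γ a) x
  have e1 : dist (γ b) (γ a) = dist (γ a) (γ b) := dist_comm _ _
  have c4 : dist x (γ b) = dist (γ b) x := dist_comm _ _
  have c5 : dist x (γ a) = dist (γ a) x := dist_comm _ _
  have hT0 : 0 ≤ T := by rw [hTdef]; linarith
  have hT1 : T ≤ dist (γ a) (γ b) := by rw [hTdef]; linarith
  set t₀ := a + T with ht₀
  have ht₀mem : t₀ ∈ Set.Icc a b := ⟨by linarith, by linarith⟩
  refine ⟨t₀, ht₀mem, ?_⟩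
  have h1 := hγ a ⟨le_refl a, hab⟩ t₀ ht₀mem
  have h2 := hγ t₀ ht₀mem b ⟨hab, le_refl b⟩
  have e4 : |a - t₀| = T := by rw [abs_sub_comm, abs_of_nonneg (by linarith)]; ring
  have e5 : |t₀ - b| = b - a - T := by rw [abs_sub_comm, abs_of_nonneg (by linarith)]; ring
  rw [e4] at h1; rw [e5] at h2
  have hhyp := hX (γ a) x (γ b) (γ t₀)
  -- dist_comm facts among γ a, γ b, γ t₀, x
  have c1 : dist (γ a) (γ t₀) = dist (γ t₀) (γ a) := dist_comm _ _
  have c2 : dist (γ t₀) (γ b) = dist (γ b) (γ t₀) := dist_comm _ _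
  have c3 : dist x (γ t₀) = dist (γ t₀) x := dist_comm _ _
  -- (γa,γb)_{γt₀} ≤ l/2
  have hgm : gp (γ t₀) (γ a) (γ b) ≤ l / 2 := by
    unfold gp; linarith [h1.1, h2.1, hab'.2]
  unfold gp
  rcases le_total (gp (γ t₀) (γ a) x) (gp (γ t₀) x (γ b)) with hc | hc
  · rw [min_eq_left hc] at hhyp
    have hle : gp (γ t₀) (γ a) x ≤ l / 2 + δ := by linarith
    unfold gp at hle
    linarith [h1.2]
  · rw [min_eq_right hc] at hhyp
    have hle : gp (γ t₀) x (γ b) ≤ l / 2 + δ := by linarith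
    unfold gp at hle
    linarith [h2.2, hab'.2]

/-- The hull of any subset is `6δ`-quasi-convex. -/
theorem hull_quasi_convex {X : Type u} [MetricSpace X] (δ : ℝ) (hδ : 0 < δ)
    (hX : IsHyp X δ) (hQG : QGSpace X) (Y : Set X) :
    QConvex (6 * δ) (hull δ Y) := by
  intro x y hy y' hy'
  obtain ⟨a, b, γ, hab, hγ, hγa, hγb, s, hs, rfl⟩ := hy
  obtain ⟨a', b', γ', hab', hγ', hγa', hγb', s', hs', rfl⟩ := hy'
  obtain ⟨c, d, σ, hcd, hσ, hσc, hσd⟩ := hQG (γ a) (γ' a') δ hδ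
  -- membership helpers
  have memγ : ∀ t ∈ Set.Icc a b, γ t ∈ hull δ Y := fun t ht =>
    ⟨a, b, γ, hab, hγ, hγa, hγb, t, ht, rfl⟩
  have memγ' : ∀ t ∈ Set.Icc a' b', γ' t ∈ hull δ Y := fun t ht =>
    ⟨a', b', γ', hab', hγ', hγa', hγb', t, ht, rfl⟩
  have memσ : ∀ t ∈ Set.Icc c d, σ t ∈ hull δ Y := fun t ht =>
    ⟨c, d, σ, hcd, hσ, hσc ▸ hγa, hσd ▸ hγa', t, ht, rfl⟩
  set A := gp x (γ s) (γ' s') with hA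
  have hdelta : (0:ℝ) ≤ δ := le_of_lt hδ
  -- hyperbolicity chain
  have h₁ := hX (γ s) (γ' a') (γ' s') x
  have h₂ := hX (γ s) (γ a) (γ' a') x
  rcases le_total (gp x (γ' a') (γ' s')) (gp x (γ s) (γ' a')) with hc1 | hc1
  · -- (γ'a', y')_x ≤ A + δ ; use γ' on [a', s']
    rw [min_eq_right hc1] at h₁
    obtain ⟨t, ht, hdist⟩ := lemA hδ hdelta hX hs'.1 (hγ'.mono (le_refl a') hs'.2) x
    have hmem := memγ' t ⟨ht.1, ht.2.trans hs'.2⟩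
    calc infDist x (hull δ Y) ≤ dist x (γ' t) := infDist_le_dist_of_mem hmem
      _ ≤ gp x (γ' a') (γ' s') + 2*δ + 2*δ := hdist
      _ ≤ A + 6*δ := by linarith
  · rw [min_eq_left hc1] at h₁
    rcases le_total (gp x (γ a) (γ' a')) (gp x (γ s) (γ a)) with hc2 | hc2
    · -- (γa, γ'a')_x small ; use σ
      rw [min_eq_right hc2] at h₂
      obtain ⟨t, ht, hdist⟩ := lemA hδ hdelta hX hcd hσ x
      have hmem := memσ t ht
      rw [hσc, hσd] at hdist
      calc infDist x (hull δ Y) ≤ dist x (σ t) := infDist_le_dist_of_mem hmem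
        _ ≤ gp x (γ a) (γ' a') + 2*δ + 2*δ := hdist
        _ ≤ A + 6*δ := by linarith
    · -- (y, γa)_x small ; use γ on [a, s]
      rw [min_eq_left hc2] at h₂
      obtain ⟨t, ht, hdist⟩ := lemA hδ hdelta hX hs.1 (hγ.mono (le_refl a) hs.2) x
      have hmem := memγ t ⟨ht.1, ht.2.trans hs.2⟩
      rw [gp_comm x (γ a) (γ s)] at hdist
      calc infDist x (hull δ Y) ≤ dist x (γ t) := infDist_le_dist_of_mem hmem
        _ ≤ gp x (γ s) (γ a) + 2*δ + 2*δ := hdist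
        _ ≤ A + 6*δ := by linarith
end

section
/- Let δ > 0. There exists σ₀ > 0, depending only on δ, such that the following holds. Let X be a δ-hyperbolic metric space in which, for all x,x' ∈ X and every l > 0, there is a (1,l)-quasi-geodesic joining x to x'; let G act on X by isometries, let σ ≥ σ₀, and let R be a σ-rotation family. Let (H,v) ∈ R, let h ∈ H∖{1}, let α ≥ 0, and let Y ⊆ X be an α-quasi-convex subset such that d(v,Y) > α + 3δ. Then for all y, y' ∈ Y one has (y, h·y')_v ≤ 3δ. -/
open Metric

universe u v

/-- A `σ`-rotation family: a nonempty set of pairs (rotation subgroup, apex). -/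
def IsRotFam {X : Type u} [MetricSpace X] {G : Type v} [Group G] [MulAction G X]
    (σ : ℝ) (R : Set (Subgroup G × X)) : Prop :=
  R.Nonempty ∧
  (∀ p ∈ R, ∀ x : X, dist x p.2 ≤ σ / 10 → ∀ h ∈ p.1, h ≠ 1 →
      dist (h • x) x = 2 * dist p.2 x) ∧
  (∀ p ∈ R, ∀ q ∈ R, p ≠ q → σ ≤ dist p.2 q.2) ∧
  (∀ g : G, ∀ p ∈ R, (Subgroup.map (MulAut.conj g).toMonoidHom p.1, g • p.2) ∈ R)

/-- The set of apices of a rotation family. -/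
def apices {G : Type v} {X : Type u} [Group G] (R : Set (Subgroup G × X)) : Set X :=
  Prod.snd '' R

/-- The subgroup `K_Y` generated by all rotation subgroups whose apex lies in `Y`. -/
def rotSub {G : Type v} {X : Type u} [Group G] (R : Set (Subgroup G × X)) (Y : Set X) :
    Subgroup G :=
  ⨆ p ∈ { q ∈ R | q.2 ∈ Y }, p.1

/-- The orbit set `P • Z`. -/
def orbSet {G : Type v} {X : Type u} [Group G] [MulAction G X] (P : Subgroup G)
    (Z : Set X) : Set X :=
  { x | ∃ g ∈ P, ∃ z ∈ Z, x = g • z }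

/-- An extended windmill `(W, N, V)` for the rotation family `R`. -/
def IsExtWindmill {X : Type u} [MetricSpace X] {G : Type v} [Group G] [MulAction G X]
    (δ : ℝ) (R : Set (Subgroup G × X)) (W : Set X) (N : Subgroup G) (V : Set X) : Prop :=
  V ⊆ apices R ∧
  QConvex (2 * δ) W ∧
  (∀ g ∈ N ⊔ rotSub R V, ∀ w ∈ W, g • w ∈ W) ∧
  (∀ g ∈ N ⊔ rotSub R V, ∀ v ∈ V, g • v ∈ V) ∧
  (∀ p ∈ R, p.2 ∉ V → ∀ h ∈ p.1, h ≠ 1 → ∀ x ∈ W, ∀ x' ∈ W,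
      gp p.2 x (h • x') ≤ 100 * δ) ∧
  (∀ p ∈ R, p.2 ∉ V → ∀ g ∈ N ⊔ rotSub R V, g • p.2 = p.2 → g = 1)

/-- Small Gromov product at an apex far from a quasi-convex subset. -/
theorem rotation_family_small_product_far_quasi_convex (δ : ℝ) (hδ : 0 < δ) :
    ∃ σ₀ : ℝ, 0 < σ₀ ∧
      ∀ (X : Type u) [MetricSpace X] (G : Type v) [Group G] [MulAction G X],
        (∀ g : G, Isometry fun x : X => g • x) →
        IsHyp X δ → QGSpace X →
        ∀ σ : ℝ, σ₀ ≤ σ → ∀ R : Set (Subgroup G × X), IsRotFam σ R →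
          ∀ p ∈ R, ∀ h ∈ p.1, h ≠ 1 →
            ∀ α : ℝ, 0 ≤ α → ∀ Y : Set X, QConvex α Y →
              α + 3 * δ < infDist p.2 Y →
              ∀ y ∈ Y, ∀ y' ∈ Y, gp p.2 y (h • y') ≤ 3 * δ := by
  refine ⟨30 * δ, by linarith, ?_⟩
  intro X _ G _ _ hiso hhyp hqg σ hσ R hR p hp h hH hh1 α hα Y hY hfar y hy y' hy'
  obtain ⟨-, hrot, -, -⟩ := hR
  have hdist : ∀ a b : X, dist (h • a) (h • b) = dist a b := fun a b => (hiso h).dist_eq a b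
  -- h fixes the apex
  have h0 := hrot p hp p.2 (by rw [dist_self]; linarith) h hH hh1
  rw [dist_self, mul_zero] at h0
  have hv : h • p.2 = p.2 := by rwa [dist_eq_zero] at h0
  have hdv : ∀ a : X, dist (h • a) p.2 = dist a p.2 := fun a => by
    calc dist (h • a) p.2 = dist (h • a) (h • p.2) := by rw [hv]
      _ = dist a p.2 := hdist a p.2
  -- quasi-convexity gives a large product of y', y at the apex
  have hC : 3 * δ < gp p.2 y' y := by
    have h1 := hY p.2 y' hy' y hy
    linarith
  -- take a quasi-geodesic from the apex to y
  obtain ⟨a, b, γ, hab, hQG, hga, hgb⟩ := hqg p.2 y (δ / 2) (by linarith)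
  have hmemA : a ∈ Set.Icc a b := ⟨le_rfl, hab⟩
  have hmemB : b ∈ Set.Icc a b := ⟨hab, le_rfl⟩
  have hab1 := hQG a hmemA b hmemB
  have habs : |a - b| = b - a := by
    rw [abs_sub_comm]; exact abs_of_nonneg (by linarith)
  have hdvy : infDist p.2 Y ≤ dist p.2 y := infDist_le_dist_of_mem hy
  have hblow : 3 * δ < b - a := by
    have h2 := hab1.1
    rw [hga, hgb, habs] at h2
    linarith
  set t := a + 3 * δ with ht
  have hmemT : t ∈ Set.Icc a b := ⟨by linarith, by linarith⟩
  have hta := hQG t hmemT a hmemA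
  have htb := hQG t hmemT b hmemB
  have habsT : |t - a| = 3 * δ := by
    rw [show t - a = 3 * δ by rw [ht]; ring]; exact abs_of_nonneg (by linarith)
  have habsTb : |t - b| = b - a - 3 * δ := by
    rw [show t - b = -(b - a - 3 * δ) by rw [ht]; ring, abs_neg]
    exact abs_of_nonneg (by linarith)
  have hz1 : dist (γ t) p.2 ≤ 3 * δ := by
    have h3 := hta.1; rw [hga, habsT] at h3; exact h3
  have hz2 : 3 * δ - δ / 2 ≤ dist (γ t) p.2 := by
    have h3 := hta.2; rw [hga, habsT] at h3; linarith
  have hz3 : dist (γ t) y ≤ b - a - 3 * δ := by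
    have h3 := htb.1; rw [hgb, habsTb] at h3; exact h3
  have hba : b - a ≤ dist p.2 y + δ / 2 := by
    have h3 := hab1.2; rw [hga, hgb, habs] at h3; linarith
  -- γ t is close to any "geodesic" from the apex to y
  have hgpz : 3 * δ - δ / 2 ≤ gp p.2 (γ t) y := by
    unfold gp
    linarith [dist_comm y p.2]
  have hgpz2 : 3 * δ - δ / 2 ≤ gp p.2 y (γ t) := by
    unfold gp at hgpz ⊢
    linarith [dist_comm (γ t) y]
  -- rotation at γ t
  have hrotz := hrot p hp (γ t) (by linarith) h hH hh1
  have hE : gp p.2 (γ t) (h • γ t) = 0 := by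
    unfold gp
    rw [hdv (γ t)]
    linarith [hrotz, dist_comm (γ t) (h • γ t), dist_comm p.2 (γ t)]
  -- hyperbolicity chain
  have hB := hhyp y (h • y') (h • y) p.2
  have heq1 : gp p.2 (h • y') (h • y) = gp p.2 y' y := by
    unfold gp; rw [hdv y', hdv y, hdist y' y]
  rw [heq1] at hB
  have hD := hhyp y (h • y) (h • γ t) p.2
  have heq2 : gp p.2 (h • y) (h • γ t) = gp p.2 y (γ t) := by
    unfold gp; rw [hdv y, hdv (γ t), hdist y (γ t)]
  rw [heq2] at hD
  have hE2 := hhyp (γ t) y (h • γ t) p.2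
  rw [hE] at hE2
  -- conclude
  by_contra hA
  push_neg at hA
  have hminAC : 3 * δ < min (gp p.2 y (h • y')) (gp p.2 y' y) := lt_min hA hC
  have hBval : 2 * δ < gp p.2 y (h • y) := by linarith
  have hminD : 2 * δ < min (gp p.2 y (h • y)) (gp p.2 y (γ t)) :=
    lt_min hBval (by linarith)
  have hDval : δ < gp p.2 y (h • γ t) := by linarith
  have hminE : δ < min (gp p.2 (γ t) y) (gp p.2 y (h • γ t)) :=
    lt_min (by linarith) hDval
  linarith
end

section
/- Let δ > 0. There exists σ₀ > 0, depending only on δ, such that the following holds. Let X be a δ-hyperbolic metric space in which, for all x,x' ∈ X and every l > 0, there is a (1,l)-quasi-geodesic joining x to x'; let G act on X by isometries, let σ ≥ σ₀, and let R be a σ-rotation family all of whose rotation subgroups are nontrivial. If (W,N,V) is an extended windmill with W nonempty, then V is contained in the 4δ-neighborhood of W, i.e. every v ∈ V satisfies d(v,W) ≤ 4δ. -/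
open Metric

universe u v

/-- The apex set `V` of an extended windmill lies in the `4δ`-neighborhood of `W`. -/
theorem windmill_apices_close_to_W (δ : ℝ) (hδ : 0 < δ) :
    ∃ σ₀ : ℝ, 0 < σ₀ ∧
      ∀ (X : Type u) [MetricSpace X] (G : Type v) [Group G] [MulAction G X],
        (∀ g : G, Isometry fun x : X => g • x) →
        IsHyp X δ → QGSpace X →
        ∀ σ : ℝ, σ₀ ≤ σ → ∀ R : Set (Subgroup G × X), IsRotFam σ R →
          (∀ p ∈ R, p.1 ≠ ⊥) →
          ∀ (W : Set X) (N : Subgroup G) (V : Set X),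
            W.Nonempty → IsExtWindmill δ R W N V →
            ∀ v ∈ V, infDist v W ≤ 4 * δ := by
  refine ⟨100 * δ, by linarith, ?_⟩
  intro X _ G _ _ hiso hhyp hqgs σ hσ R hrot hne W N V hWne hwm v hv
  obtain ⟨hVap, hQC, hWinv, _, _, _⟩ := hwm
  obtain ⟨p, hpR, hpv⟩ := hVap hv
  obtain ⟨h, hhp, hh1⟩ := (p.1.bot_or_exists_ne_one).resolve_left (hne p hpR)
  have hσ0 : (0:ℝ) < σ := by linarith
  obtain ⟨-, hR1, -, -⟩ := hrot
  have hdg : ∀ (g : G) (a b : X), dist (g • a) (g • b) = dist a b :=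
    fun g a b => (hiso g).dist_eq a b
  -- h fixes the apex v
  have hfix : h • v = v := by
    have h0 : dist v p.2 ≤ σ / 10 := by rw [hpv, dist_self]; positivity
    have := hR1 p hpR v h0 h hhp hh1
    rw [hpv, dist_self, mul_zero] at this
    exact dist_eq_zero.mp this
  -- h belongs to N ⊔ K_V
  have hhL : h ∈ N ⊔ rotSub R V := by
    have hle : p.1 ≤ rotSub R V :=
      le_iSup₂ (f := fun q (_ : q ∈ { q ∈ R | q.2 ∈ V }) => q.1) p ⟨hpR, hpv ▸ hv⟩
    exact (le_sup_right : rotSub R V ≤ N ⊔ rotSub R V) (hle hhp)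
  obtain ⟨w, hw⟩ := hWne
  have hw' : h • w ∈ W := hWinv h hhL w hw
  have hd2 : dist (h • w) v = dist w v := by
    conv_lhs => rw [← hfix]
    exact hdg h w v
  -- main claim : gp v w (h • w) ≤ 2δ
  have key : gp v w (h • w) ≤ 2 * δ := by
    by_cases hcase : dist v w ≤ σ / 10
    · -- w is already close to v
      have h0 : dist w p.2 ≤ σ / 10 := by rw [hpv, dist_comm]; exact hcase
      have hR := hR1 p hpR w h0 h hhp hh1
      rw [hpv] at hR
      have : dist w (h • w) = 2 * dist v w := by rw [dist_comm]; exact hR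
      simp only [gp]
      rw [hd2, this, dist_comm w v]
      linarith
    · push_neg at hcase
      obtain ⟨a, b, γ, hab, hqg, hga, hgb⟩ := hqgs v w δ hδ
      set r : ℝ := σ / 10 with hr
      have hrδ : 9 * δ ≤ r - δ := by rw [hr]; linarith
      have hmemA : a ∈ Set.Icc a b := ⟨le_refl a, hab⟩
      have hmemB : b ∈ Set.Icc a b := ⟨hab, le_refl b⟩
      have habs : |a - b| = b - a := by rw [abs_sub_comm, abs_of_nonneg (by linarith)]
      obtain ⟨hub, hlb⟩ := hqg a hmemA b hmemB
      rw [hga, hgb, habs] at hub hlb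
      have htb : a + r ≤ b := by linarith
      have hmemT : a + r ∈ Set.Icc a b := ⟨by linarith [hσ0], htb⟩
      set x : X := γ (a + r) with hx
      obtain ⟨e1, e2⟩ := hqg (a + r) hmemT a hmemA
      rw [hga] at e1 e2
      have habs1 : |a + r - a| = r := by rw [abs_of_nonneg (by linarith)]; ring
      rw [habs1] at e1 e2
      obtain ⟨e3, -⟩ := hqg (a + r) hmemT b hmemB
      rw [hgb] at e3
      have habs2 : |a + r - b| = b - a - r := by rw [abs_of_nonpos (by linarith)]; ring
      rw [habs2] at e3
      -- rotation at x
      have hxv : dist x p.2 ≤ σ / 10 := by rw [hpv]; exact e1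
      have hRx : dist (h • x) x = 2 * dist v x := by rw [← hpv]; exact hR1 p hpR x hxv h hhp hh1
      have hd1 : dist (h • x) v = dist x v := by
        conv_lhs => rw [← hfix]
        exact hdg h x v
      have hd3 : dist (h • w) (h • x) = dist w x := hdg h w x
      have g1 : r - δ ≤ gp v x w := by
        simp only [gp]
        rw [dist_comm w v] at *
        linarith
      have g2 : r - δ ≤ gp v (h • w) (h • x) := by
        simp only [gp] at g1 ⊢
        rw [hd1, hd2, hd3, dist_comm w x, dist_comm x w] at *
        linarith
      have g3 : gp v x (h • x) = 0 := by
        simp only [gp]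
        rw [hd1, dist_comm x (h • x), hRx, dist_comm v x]
        ring
      have A := hhyp x w (h • x) v
      have B := hhyp w (h • w) (h • x) v
      rw [g3] at A
      rcases min_cases (gp v x w) (gp v w (h • x)) with ⟨hmin, hle⟩ | ⟨hmin, hle⟩ <;>
        rw [hmin] at A <;>
        rcases min_cases (gp v w (h • w)) (gp v (h • w) (h • x)) with ⟨hmin2, hle2⟩ | ⟨hmin2, hle2⟩ <;>
        rw [hmin2] at B <;> linarith
  have := hQC v w hw (h • w) hw'
  linarith
end

section
/- Let δ > 0. There exists σ₀ > 0, depending only on δ, such that the following holds. Let X be a δ-hyperbolic metric space in which, for all x,x' ∈ X and every l > 0, there is a (1,l)-quasi-geodesic joining x to x'; let G act on X by isometries, let σ ≥ σ₀, let R be a σ-rotation family, and let (W,N,V) be an extended windmill with W nonempty and L = ⟨N ∪ K_V⟩. Set A = { v ∈ v(R)∖V : d(v,W) ≤ 3σ/10 }, assume A is nonempty, let S = Hull(W ∪ A), let W' be the (σ/10)-neighborhood of the orbit K_A·S, and let V' = W' ∩ v(R). Then the subgroup of G generated by L ∪ K_A equals the subgroup generated by N ∪ K_{V'}; moreover both W'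 and V' are invariant under this subgroup L' = ⟨L ∪ K_A⟩. -/
open Metric

universe u v

section auxlemmas

variable {Y : Type u} [MetricSpace Y]

lemma gp_symm (x y z : Y) : gp x y z = gp x z y := by
  unfold gp; rw [dist_comm y z]; ring

lemma dist_sub_dist_le_gp (x y z : Y) : dist z x - dist y z ≤ gp x y z := by
  have h := dist_triangle z y x
  have h2 := dist_comm z y
  have h3 := dist_comm y x
  unfold gp; linarith

end auxlemmas

/-- The subgroup of elements preserving a subset (in the iff form). -/
def invSub {X : Type u} [MetricSpace X] {G : Type v} [Group G] [MulAction G X]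
    (S' : Set X) : Subgroup G where
  carrier := {g | ∀ x : X, x ∈ S' ↔ g • x ∈ S'}
  one_mem' := by intro x; simp
  mul_mem' := by
    intro a b ha hb x
    rw [hb x, ha (b • x), mul_smul]
  inv_mem' := by
    intro a ha x
    have := ha (a⁻¹ • x)
    rw [smul_inv_smul] at this
    exact this.symm

lemma mem_invSub {X : Type u} [MetricSpace X] {G : Type v} [Group G] [MulAction G X]
    {S' : Set X} {g : G} : g ∈ invSub (X := X) S' ↔ ∀ x : X, x ∈ S' ↔ g • x ∈ S' := Iff.rfl


/-- `⟨L ∪ K_A⟩ = ⟨N ∪ K_{V'}⟩` and both `W'` and `V'` are invariant under this subgroup. -/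
theorem windmill_L'_invariance (δ : ℝ) (hδ : 0 < δ) :
    ∃ σ₀ : ℝ, 0 < σ₀ ∧
      ∀ (X : Type u) [MetricSpace X] (G : Type v) [Group G] [MulAction G X],
        (∀ g : G, Isometry fun x : X => g • x) →
        IsHyp X δ → QGSpace X →
        ∀ σ : ℝ, σ₀ ≤ σ → ∀ R : Set (Subgroup G × X), IsRotFam σ R →
          ∀ (W : Set X) (N : Subgroup G) (V : Set X),
            W.Nonempty → IsExtWindmill δ R W N V →
            ∀ A : Set X,
              A = { v | v ∈ apices R ∧ v ∉ V ∧ infDist v W ≤ 3 * σ / 10 } →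
              A.Nonempty →
              ∀ S : Set X, S = hull δ (W ∪ A) →
                ∀ W' : Set X, W' = nbhd (σ / 10) (orbSet (rotSub R A) S) →
                  ∀ V' : Set X, V' = W' ∩ apices R →
                    (N ⊔ rotSub R V) ⊔ rotSub R A = N ⊔ rotSub R V' ∧
                    (∀ g ∈ (N ⊔ rotSub R V) ⊔ rotSub R A, ∀ w ∈ W', g • w ∈ W') ∧
                    (∀ g ∈ (N ⊔ rotSub R V) ⊔ rotSub R A, ∀ v ∈ V', g • v ∈ V') := by
  refine ⟨100 * δ, by linarith, ?_⟩
  intro X _ G _ _ hiso hHyp hQGS σ hσ R hR W N V hWne hwm A hA hAne S hS W' hW' V' hV'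
  subst hA hS hW' hV'
  obtain ⟨hRne, hR1, hR2, hR3⟩ := hR
  obtain ⟨hVap, hQC, hWinv, hVinv, hW3, hW4⟩ := hwm
  have hσδ : 100 * δ ≤ σ := hσ
  have hσ0 : 0 < σ := by linarith
  -- basic facts about the isometric action
  have hdist : ∀ (g : G) (x y : X), dist (g • x) (g • y) = dist x y :=
    fun g x y => (hiso g).dist_eq x y
  -- apices are invariant and σ-separated
  have hap : ∀ (g : G), ∀ u ∈ apices R, g • u ∈ apices R := by
    rintro g u ⟨p, hp, rfl⟩
    exact ⟨_, hR3 g p hp, rfl⟩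
  have hsep : ∀ u ∈ apices R, ∀ u' ∈ apices R, u ≠ u' → σ ≤ dist u u' := by
    rintro u ⟨p, hp, rfl⟩ u' ⟨q, hq, rfl⟩ hne
    exact hR2 p hp q hq (fun h => hne (by rw [h]))
  -- rotSub membership lemmas
  have hle_rot : ∀ (Y : Set X), ∀ p ∈ R, p.2 ∈ Y → p.1 ≤ rotSub R Y := by
    intro Y p hp hpY
    exact le_iSup₂ (f := fun (q : Subgroup G × X) (_ : q ∈ {q ∈ R | q.2 ∈ Y}) => q.1)
      p ⟨hp, hpY⟩
  have hrot_le : ∀ (Y : Set X) (K : Subgroup G),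
      (∀ p ∈ R, p.2 ∈ Y → p.1 ≤ K) → rotSub R Y ≤ K := by
    intro Y K h
    exact iSup₂_le (fun p hp => h p hp.1 hp.2)
  have hrot_mono : ∀ (Y Y' : Set X), Y ⊆ Y' → rotSub R Y ≤ rotSub R Y' :=
    fun Y Y' hYY' => hrot_le Y _ (fun p hp hpY => hle_rot Y' p hp (hYY' hpY))
  -- abbreviations
  set A : Set X := { v | v ∈ apices R ∧ v ∉ V ∧ infDist v W ≤ 3 * σ / 10 } with hAdef
  -- invariance of W as a set equality
  have hWset : ∀ g ∈ N ⊔ rotSub R V, (fun x => g • x) '' W = W := by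
    intro g hg
    ext y; constructor
    · rintro ⟨w, hw, rfl⟩; exact hWinv g hg w hw
    · intro hy; exact ⟨g⁻¹ • y, hWinv g⁻¹ (inv_mem hg) y hy, smul_inv_smul g y⟩
  -- A is invariant under L₀ = N ⊔ K_V
  have hA_inv : ∀ g ∈ N ⊔ rotSub R V, ∀ v ∈ A, g • v ∈ A := by
    intro g hg v hv
    obtain ⟨hv1, hv2, hv3⟩ := hv
    refine ⟨hap g v hv1, ?_, ?_⟩
    · intro hgv
      have := hVinv g⁻¹ (inv_mem hg) _ hgv
      rw [inv_smul_smul] at this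
      exact hv2 this
    · calc infDist (g • v) W = infDist (g • v) ((fun x => g • x) '' W) := by
            rw [hWset g hg]
        _ = infDist v W := infDist_image (hiso g)
        _ ≤ 3 * σ / 10 := hv3
  have hWA_inv : ∀ g ∈ N ⊔ rotSub R V, ∀ y ∈ W ∪ A, g • y ∈ W ∪ A := by
    intro g hg y hy
    rcases hy with hy | hy
    · exact Or.inl (hWinv g hg y hy)
    · exact Or.inr (hA_inv g hg y hy)
  -- S = hull δ (W ∪ A) is invariant under L₀
  have hS_inv : ∀ g ∈ N ⊔ rotSub R V, ∀ s ∈ hull δ (W ∪ A), g • s ∈ hull δ (W ∪ A) := by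
    rintro g hg s ⟨a, b, γ, hab, hQG, ha, hb, t, ht, rfl⟩
    refine ⟨a, b, fun t => g • γ t, hab, ?_, hWA_inv g hg _ ha, hWA_inv g hg _ hb,
      t, ht, rfl⟩
    intro t₁ ht₁ t₂ ht₂
    have := hQG t₁ ht₁ t₂ ht₂
    simpa [hdist] using this
  -- conjugation of K_A by elements of L₀
  have hconjA : ∀ g ∈ N ⊔ rotSub R V, ∀ k ∈ rotSub R A, g * k * g⁻¹ ∈ rotSub R A := by
    intro g hg
    have hle : rotSub R A ≤ Subgroup.comap (MulAut.conj g).toMonoidHom (rotSub R A) := by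
      apply hrot_le
      intro p hp hpA
      rw [← Subgroup.map_le_iff_le_comap]
      exact hle_rot A _ (hR3 g p hp) (hA_inv g hg p.2 hpA)
    intro k hk
    have := hle hk
    simpa [Subgroup.mem_comap, MulAut.conj_apply] using this
  -- W ∪ A ⊆ S ⊆ S' := orbSet K_A S
  have hWS : W ∪ A ⊆ hull δ (W ∪ A) := by
    intro y hy
    refine ⟨0, 0, fun _ => y, le_refl 0, ?_, hy, hy, 0, by simp, rfl⟩
    intro t ht t' ht'
    have h1 : t = 0 := le_antisymm ht.2 ht.1
    have h2 : t' = 0 := le_antisymm ht'.2 ht'.1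
    subst h1 h2
    simp [le_of_lt hδ]
  have hSS' : hull δ (W ∪ A) ⊆ orbSet (rotSub R A) (hull δ (W ∪ A)) :=
    fun z hz => ⟨1, one_mem _, z, hz, (one_smul G z).symm⟩
  have hWS' : W ⊆ orbSet (rotSub R A) (hull δ (W ∪ A)) :=
    fun w hw => hSS' (hWS (Or.inl hw))
  have hS'ne : (orbSet (rotSub R A) (hull δ (W ∪ A))).Nonempty :=
    hWne.imp (fun w hw => hWS' hw)
  -- S' is invariant under L₀ and K_A
  have hL0S' : ∀ g ∈ N ⊔ rotSub R V, ∀ x ∈ orbSet (rotSub R A) (hull δ (W ∪ A)),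
      g • x ∈ orbSet (rotSub R A) (hull δ (W ∪ A)) := by
    rintro g hg x ⟨k, hk, s, hs, rfl⟩
    refine ⟨g * k * g⁻¹, hconjA g hg k hk, g • s, hS_inv g hg s hs, ?_⟩
    rw [smul_smul, smul_smul, inv_mul_cancel_right]
  have hKAS' : ∀ g ∈ rotSub R A, ∀ x ∈ orbSet (rotSub R A) (hull δ (W ∪ A)),
      g • x ∈ orbSet (rotSub R A) (hull δ (W ∪ A)) := by
    rintro g hg x ⟨k, hk, s, hs, rfl⟩
    exact ⟨g * k, mul_mem hg hk, s, hs, by rw [smul_smul]⟩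
  -- every element of L' preserves S' (in both directions)
  have hL'P : (N ⊔ rotSub R V) ⊔ rotSub R A ≤
      invSub (G := G) (orbSet (rotSub R A) (hull δ (W ∪ A))) := by
    refine sup_le ?_ ?_
    · intro g hg
      rw [mem_invSub]
      intro x
      constructor
      · exact fun h => hL0S' g hg x h
      · intro h
        have := hL0S' g⁻¹ (inv_mem hg) _ h
        rwa [inv_smul_smul] at this
    · intro g hg
      rw [mem_invSub]
      intro x
      constructor
      · exact fun h => hKAS' g hg x h
      · intro h
        have := hKAS' g⁻¹ (inv_mem hg) _ h
        rwa [inv_smul_smul] at this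
  have hS'set : ∀ g ∈ (N ⊔ rotSub R V) ⊔ rotSub R A,
      (fun x => g • x) '' orbSet (rotSub R A) (hull δ (W ∪ A)) =
        orbSet (rotSub R A) (hull δ (W ∪ A)) := by
    intro g hg
    ext y; constructor
    · rintro ⟨x, hx, rfl⟩
      exact (hL'P hg x).1 hx
    · intro hy
      refine ⟨g⁻¹ • y, ?_, smul_inv_smul g y⟩
      have h2 := hL'P hg (g⁻¹ • y)
      rw [smul_inv_smul] at h2
      exact h2.2 hy
  -- invariance of W'
  have hW'inv : ∀ g ∈ (N ⊔ rotSub R V) ⊔ rotSub R A,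
      ∀ w ∈ nbhd (σ / 10) (orbSet (rotSub R A) (hull δ (W ∪ A))),
        g • w ∈ nbhd (σ / 10) (orbSet (rotSub R A) (hull δ (W ∪ A))) := by
    intro g hg w hw
    show infDist (g • w) (orbSet (rotSub R A) (hull δ (W ∪ A))) ≤ σ / 10
    calc infDist (g • w) (orbSet (rotSub R A) (hull δ (W ∪ A)))
        = infDist (g • w) ((fun x => g • x) '' orbSet (rotSub R A) (hull δ (W ∪ A))) := by
          rw [hS'set g hg]
      _ = infDist w (orbSet (rotSub R A) (hull δ (W ∪ A))) := infDist_image (hiso g)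
      _ ≤ σ / 10 := hw
  have hV'inv : ∀ g ∈ (N ⊔ rotSub R V) ⊔ rotSub R A,
      ∀ v ∈ nbhd (σ / 10) (orbSet (rotSub R A) (hull δ (W ∪ A))) ∩ apices R,
        g • v ∈ nbhd (σ / 10) (orbSet (rotSub R A) (hull δ (W ∪ A))) ∩ apices R := by
    intro g hg v hv
    exact ⟨hW'inv g hg v hv.1, hap g v hv.2⟩
  -- ★ : an apex not in V within σ/10 + δ of S lies in A
  have hstar : ∀ u ∈ apices R, u ∉ V →
      (∃ z ∈ hull δ (W ∪ A), dist u z ≤ σ / 10 + δ) → u ∈ A := by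
    rintro u hu_ap hu_nV ⟨z, hz, hdz⟩
    by_contra huA
    apply huA
    refine ⟨hu_ap, hu_nV, ?_⟩
    obtain ⟨a, b, γ, hab, hQG, hy1, hy2, t, ht, rfl⟩ := hz
    have hamem : a ∈ Set.Icc a b := ⟨le_refl a, hab⟩
    have hbmem : b ∈ Set.Icc a b := ⟨hab, le_refl b⟩
    -- endpoint replacement
    have endpt : ∀ y, y ∈ W ∪ A → ∃ w ∈ W, ∀ u' : X, ∀ c : ℝ, c ≤ 3 * δ / 2 →
        gp (γ t) u' y ≤ c → gp (γ t) u' w ≤ c + δ := by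
      intro y hy
      rcases hy with hyW | hyA
      · exact ⟨y, hyW, fun u' c _ h => h.trans (by linarith)⟩
      · have hne : u ≠ y := fun h => huA (h ▸ hyA)
        obtain ⟨hy_ap, hy_nV, hy_d⟩ := hyA
        have hσd : σ ≤ dist u y := hsep u hu_ap y hy_ap hne
        have hlt : infDist y W < 3 * σ / 10 + δ := lt_of_le_of_lt hy_d (by linarith)
        obtain ⟨w, hwW, hwd⟩ := (infDist_lt_iff hWne).1 hlt
        refine ⟨w, hwW, ?_⟩
        intro u' c hc h
        have hzy : σ - (σ / 10 + δ) ≤ dist (γ t) y := by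
          have h4 := dist_triangle u (γ t) y
          linarith
        have hbig : 6 * σ / 10 - 2 * δ ≤ gp (γ t) w y := by
          have h1 := dist_sub_dist_le_gp (γ t) w y
          have h2 := dist_comm y (γ t)
          have h3 := dist_comm y w
          linarith
        have hh := hHyp u' w y (γ t)
        have hmin : min (gp (γ t) u' w) (gp (γ t) w y) ≤ c + δ := by linarith
        rcases min_le_iff.1 hmin with h' | h'
        · exact h'
        · linarith
    -- base estimate: the Gromov product of the endpoints at γ t is ≤ δ/2
    have hbase : gp (γ t) (γ a) (γ b) ≤ δ / 2 := by
      have h1 := (hQG t ht a hamem).1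
      have h2 := (hQG t ht b hbmem).1
      have h3 := (hQG a hamem b hbmem).2
      have e1 : |t - a| = t - a := abs_of_nonneg (by linarith [ht.1])
      have e2 : |t - b| = b - t := by
        rw [abs_sub_comm]; exact abs_of_nonneg (by linarith [ht.2])
      have e3 : |a - b| = b - a := by
        rw [abs_sub_comm]; exact abs_of_nonneg (by linarith)
      rw [e1] at h1; rw [e2] at h2; rw [e3] at h3
      have c1 := dist_comm (γ t) (γ a)
      have c2 := dist_comm (γ t) (γ b)
      unfold gp
      linarith
    obtain ⟨w2, hw2W, hw2⟩ := endpt (γ b) hy2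
    have hstep1 : gp (γ t) (γ a) w2 ≤ δ / 2 + δ :=
      hw2 (γ a) (δ / 2) (by linarith) hbase
    obtain ⟨w1, hw1W, hw1⟩ := endpt (γ a) hy1
    have hstep2 : gp (γ t) w2 w1 ≤ δ / 2 + δ + δ := by
      refine hw1 w2 (δ / 2 + δ) (by linarith) ?_
      rw [gp_symm] at hstep1
      exact hstep1
    have hQCz := hQC (γ t) w2 hw2W w1 hw1W
    have htri : infDist u W ≤ infDist (γ t) W + dist u (γ t) :=
      infDist_le_infDist_add_dist
    linarith
  -- apices of V with nontrivial rotation group lie in V'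
  have hKVle : rotSub R V ≤ rotSub R
      (nbhd (σ / 10) (orbSet (rotSub R A) (hull δ (W ∪ A))) ∩ apices R) := by
    apply hrot_le
    intro p hp hpV
    rcases p.1.bot_or_exists_ne_one with hbot | ⟨h, hhp, hh1⟩
    · rw [hbot]; exact bot_le
    · refine hle_rot _ p hp ⟨?_, ⟨p, hp, rfl⟩⟩
      obtain ⟨w0, hw0⟩ := id hWne
      have hhL : h ∈ N ⊔ rotSub R V := Subgroup.mem_sup_right (hle_rot V p hp hpV hhp)
      have hhw0 : h • w0 ∈ W := hWinv h hhL w0 hw0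
      have hfix : h • p.2 = p.2 := by
        have h5 := hR1 p hp p.2 (by rw [dist_self]; positivity) h hhp hh1
        rw [dist_self, mul_zero] at h5
        exact dist_eq_zero.1 h5
      have hdhw : dist (h • w0) p.2 = dist w0 p.2 := by
        conv_lhs => rw [← hfix]
        exact hdist h w0 p.2
      have key : gp p.2 w0 (h • w0) ≤ 2 * δ := by
        rcases le_or_gt (dist p.2 w0) (σ / 10) with hcase | hcase
        · have h6 := hR1 p hp w0 (by rw [dist_comm]; exact hcase) h hhp hh1
          have c1 := dist_comm w0 (h • w0)
          have c2 := dist_comm p.2 w0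
          unfold gp
          linarith
        · obtain ⟨a, b, γ, hab, hQG, hga, hgb⟩ := hQGS p.2 w0 δ hδ
          have htmem : a + (σ / 10 - δ) ∈ Set.Icc a b := by
            constructor
            · linarith
            · have h7 := (hQG a ⟨le_refl a, hab⟩ b ⟨hab, le_refl b⟩).1
              rw [hga, hgb] at h7
              have e3 : |a - b| = b - a := by
                rw [abs_sub_comm]; exact abs_of_nonneg (by linarith)
              rw [e3] at h7
              linarith
          have hamem : a ∈ Set.Icc a b := ⟨le_refl a, hab⟩
          have hbmem : b ∈ Set.Icc a b := ⟨hab, le_refl b⟩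
          set x := γ (a + (σ / 10 - δ)) with hx
          have habs : |a + (σ / 10 - δ) - a| = σ / 10 - δ := by
            rw [show a + (σ / 10 - δ) - a = σ / 10 - δ by ring]
            exact abs_of_nonneg (by linarith)
          have hxv_both := hQG _ htmem a hamem
          rw [hga, habs] at hxv_both
          have hxv : dist x p.2 ≤ σ / 10 - δ := hxv_both.1
          have hxv' : σ / 10 - 2 * δ ≤ dist x p.2 := by linarith [hxv_both.2]
          have hxw_both := hQG _ htmem b hbmem
          rw [hgb] at hxw_both
          have habs2 : |a + (σ / 10 - δ) - b| = b - (a + (σ / 10 - δ)) := by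
            rw [abs_sub_comm]; exact abs_of_nonneg (by linarith [htmem.2])
          rw [habs2] at hxw_both
          have hxw : dist x w0 ≤ b - (a + (σ / 10 - δ)) := hxw_both.1
          have hvw_both := hQG a hamem b hbmem
          rw [hga, hgb] at hvw_both
          have e3 : |a - b| = b - a := by
            rw [abs_sub_comm]
            exact abs_of_nonneg (by linarith)
          rw [e3] at hvw_both
          have hvw : b - a - δ ≤ dist p.2 w0 := by linarith [hvw_both.2]
          have hgpxw : σ / 10 - 2 * δ ≤ gp p.2 x w0 := by
            have c1 := dist_comm p.2 w0
            unfold gp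
            linarith
          have hx2 := hR1 p hp x (by linarith) h hhp hh1
          have hdhx : dist (h • x) p.2 = dist x p.2 := by
            conv_lhs => rw [← hfix]
            exact hdist h x p.2
          have hgpxx : gp p.2 x (h • x) ≤ 0 := by
            have c1 := dist_comm x (h • x)
            have c2 := dist_comm p.2 x
            unfold gp
            linarith
          have hhyp1 := hHyp x w0 (h • x) p.2
          have hgw0hx : gp p.2 w0 (h • x) ≤ δ := by
            have hmin : min (gp p.2 x w0) (gp p.2 w0 (h • x)) ≤ δ := by linarith
            rcases min_le_iff.1 hmin with h' | h'
            · linarith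
            · exact h'
          have heq : gp p.2 (h • w0) (h • x) = gp p.2 w0 x := by
            unfold gp
            rw [hdhw, hdhx, hdist h w0 x]
          have hhyp2 := hHyp w0 (h • w0) (h • x) p.2
          have hmin2 : min (gp p.2 w0 (h • w0)) (gp p.2 (h • w0) (h • x)) ≤ 2 * δ := by
            linarith
          rcases min_le_iff.1 hmin2 with h' | h'
          · exact h'
          · rw [heq, gp_symm] at h'
            linarith
      have hQCv := hQC p.2 w0 hw0 (h • w0) hhw0
      show infDist p.2 (orbSet (rotSub R A) (hull δ (W ∪ A))) ≤ σ / 10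
      have hsub : infDist p.2 (orbSet (rotSub R A) (hull δ (W ∪ A))) ≤ infDist p.2 W :=
        infDist_le_infDist_of_subset hWS' hWne
      linarith
  -- A ⊆ V'
  have hAV' : A ⊆ nbhd (σ / 10) (orbSet (rotSub R A) (hull δ (W ∪ A))) ∩ apices R := by
    intro v hv
    refine ⟨?_, hv.1⟩
    show infDist v (orbSet (rotSub R A) (hull δ (W ∪ A))) ≤ σ / 10
    have : infDist v (orbSet (rotSub R A) (hull δ (W ∪ A))) ≤ dist v v :=
      infDist_le_dist_of_mem (hSS' (hWS (Or.inr hv)))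
    rw [dist_self] at this
    linarith
  -- K_{V'} ≤ L'
  have hKV'le : rotSub R
      (nbhd (σ / 10) (orbSet (rotSub R A) (hull δ (W ∪ A))) ∩ apices R) ≤
      (N ⊔ rotSub R V) ⊔ rotSub R A := by
    apply hrot_le
    intro q hq hqV'
    obtain ⟨hqW', hqap⟩ := hqV'
    have hlt : infDist q.2 (orbSet (rotSub R A) (hull δ (W ∪ A))) < σ / 10 + δ :=
      lt_of_le_of_lt hqW' (by linarith)
    obtain ⟨y, hyS', hyd⟩ := (infDist_lt_iff hS'ne).1 hlt
    obtain ⟨k, hk, s, hs, rfl⟩ := hyS'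
    have hq' := hR3 k⁻¹ q hq
    have hu_ap : k⁻¹ • q.2 ∈ apices R := ⟨_, hq', rfl⟩
    have hdist' : dist (k⁻¹ • q.2) s ≤ σ / 10 + δ := by
      have h8 : dist (k⁻¹ • q.2) (k⁻¹ • (k • s)) = dist q.2 (k • s) := hdist k⁻¹ _ _
      rw [inv_smul_smul] at h8
      linarith [le_of_lt hyd]
    have huVA : k⁻¹ • q.2 ∈ V ∨ k⁻¹ • q.2 ∈ A := by
      by_cases hV : k⁻¹ • q.2 ∈ V
      · exact Or.inl hV
      · exact Or.inr (hstar _ hu_ap hV ⟨s, hs, hdist'⟩)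
    have hmaple : Subgroup.map (MulAut.conj k⁻¹).toMonoidHom q.1 ≤
        (N ⊔ rotSub R V) ⊔ rotSub R A := by
      rcases huVA with hV | hA'
      · exact le_trans (hle_rot V _ hq' hV) (le_trans le_sup_right le_sup_left)
      · exact le_trans (hle_rot A _ hq' hA') le_sup_right
    have hkL' : k ∈ (N ⊔ rotSub R V) ⊔ rotSub R A := Subgroup.mem_sup_right hk
    intro h hh
    have hconjmem : (MulAut.conj k⁻¹).toMonoidHom h ∈ (N ⊔ rotSub R V) ⊔ rotSub R A :=
      hmaple (Subgroup.mem_map.2 ⟨h, hh, rfl⟩)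
    have h9 : k * ((MulAut.conj k⁻¹).toMonoidHom h) * k⁻¹ ∈
        (N ⊔ rotSub R V) ⊔ rotSub R A :=
      mul_mem (mul_mem hkL' hconjmem) (inv_mem hkL')
    have h10 : k * ((MulAut.conj k⁻¹).toMonoidHom h) * k⁻¹ = h := by
      simp [MulAut.conj_apply]
      group
    rwa [h10] at h9
  refine ⟨le_antisymm ?_ ?_, hW'inv, hV'inv⟩
  · refine sup_le (sup_le le_sup_left ?_) ?_
    · exact le_trans hKVle le_sup_right
    · exact le_trans (hrot_mono A _ hAV') le_sup_right
  · exact sup_le (le_trans le_sup_left le_sup_left) hKV'le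
end
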